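/- arXiv:1409.6087 — 6 statements merged into one kernel-verified Lean document; each statement's English description precedes it below -/
import Mathlib

section
/- Given a nowhere-zero Z_2-flow φ' with entries in {-1,0,1} for each of r layers (i.e., for each k, Σ_i ∂_{ij} φ'_{ik} = 0 in Z for every row j), the vector y with y_i = Σ_{k=1}^r φ'_{ik} 2^{k-1} satisfies ∂y ≡ 0 (mod 2^r), and y_i ≡ 0 (mod 2^r) implies φ'_{ik} = 0 for all k. -/
/-!
The vector `y` is the combination `∑ k, 2 ^ k • φ' · k` of integer flows, so `∂ y = 0`
already over `ℤ`, hence modulo `2 ^ r`. Conversely, if `2 ^ r ∣ ∑ k, ε k 2 ^ k` with digits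
`ε k ∈ {-1, 0, 1}`, the sum is `≡ ε 0 (mod 2)`, so `ε 0 = 0`; dividing by `2` and inducting on
`r` kills the remaining digits.
-/

open Matrix

theorem eq_zero_of_two_pow_dvd_sum_mul_two_pow {r : ℕ} (ε : Fin r → ℤ) (hε : ∀ k, |ε k| ≤ 1)
    (hdvd : (2 : ℤ) ^ r ∣ ∑ k, ε k * 2 ^ (k : ℕ)) : ∀ k, ε k = 0 := by
  induction r with
  | zero => exact fun k => k.elim0
  | succ r ih =>
    set S := ∑ k : Fin r, ε k.succ * 2 ^ (k : ℕ)
    have hsplit : ∑ k : Fin (r + 1), ε k * 2 ^ (k : ℕ) = ε 0 + 2 * S := by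
      rw [Fin.sum_univ_succ, Finset.mul_sum]
      simp only [Fin.val_zero, pow_zero, mul_one, Fin.val_succ, pow_succ]
      congr 1
      exact Finset.sum_congr rfl fun k _ => by ring
    rw [hsplit, pow_succ'] at hdvd
    have hε0 : ε 0 = 0 := by
      obtain ⟨m, hm⟩ := (dvd_mul_right 2 _).trans hdvd
      have := abs_le.mp (hε 0)
      omega
    have hS : (2 : ℤ) ^ r ∣ S := by
      rw [hε0, zero_add] at hdvd
      exact (mul_dvd_mul_iff_left two_ne_zero).mp hdvd
    intro k
    cases k using Fin.cases with
    | zero => exact hε0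
    | succ k => exact ih (fun k => ε k.succ) (fun k => hε k.succ) hS k

theorem mulVec_sum_smul_eq_zero {m n ι R : Type*} [Fintype n] [CommRing R] (M : Matrix m n R)
    {s : Finset ι} (c : ι → R) (v : ι → n → R) (hv : ∀ k ∈ s, M *ᵥ v k = 0) :
    M *ᵥ (∑ k ∈ s, c k • v k) = 0 := by
  rw [mulVec_sum]
  exact Finset.sum_eq_zero fun k hk => by rw [mulVec_smul, hv k hk, smul_zero]

theorem stmt1_general {J : Type} [Fintype J] (n r : ℕ) (bdry : Matrix J (Fin n) ℤ)
    (φ' : Fin n → Fin r → ℤ)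
    (hval : ∀ i k, φ' i k = -1 ∨ φ' i k = 0 ∨ φ' i k = 1)
    (hflow : ∀ k : Fin r, bdry.mulVec (fun i => φ' i k) = 0)
    (y : Fin n → ℤ) (hy : ∀ i, y i = ∑ k : Fin r, φ' i k * 2 ^ (k : ℕ)) :
    ((bdry.map (Int.cast : ℤ → ZMod (2 ^ r))).mulVec (fun i => ((y i : ℤ) : ZMod (2 ^ r))) = 0)
      ∧ ∀ i, ((y i : ℤ) : ZMod (2 ^ r)) = 0 → ∀ k, φ' i k = 0 := by
  have hy_sum : y = ∑ k : Fin r, (2 : ℤ) ^ (k : ℕ) • fun i => φ' i k := by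
    ext i
    simp only [hy i, Finset.sum_apply, Pi.smul_apply, smul_eq_mul, mul_comm]
  have hbdry_y : bdry *ᵥ y = 0 :=
    hy_sum ▸ mulVec_sum_smul_eq_zero bdry _ _ fun k _ => hflow k
  refine ⟨funext fun j => ?_, fun i hyi => ?_⟩
  · have := (Int.castRingHom (ZMod (2 ^ r))).map_mulVec bdry y j
    simpa [hbdry_y, Function.comp_def] using this.symm
  · rw [ZMod.intCast_zmod_eq_zero_iff_dvd, hy i] at hyi
    refine eq_zero_of_two_pow_dvd_sum_mul_two_pow (φ' i) (fun k => ?_) (by exact_mod_cast hyi)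
    rcases hval i k with h | h | h <;> simp [h]

/-- Let `∂` be an integer matrix with `n` columns.  Suppose each layer
`φ' · k` has entries in `{-1,0,1}`, is nowhere zero as a `ℤ₂^r`-vector (for each `i`
some layer is nonzero), and satisfies `∑ i ∂_{j i} φ'_{i k} = 0` over `ℤ` for every row
`j`.  Then `y` with `y i = ∑ k φ'_{i k} 2^k` satisfies `∂ y ≡ 0 (mod 2^r)`, and
`y i ≡ 0 (mod 2^r)` forces `φ'_{i k} = 0` for all `k`. -/
theorem stmt1 {J : Type} [Fintype J] (n r : ℕ) (bdry : Matrix J (Fin n) ℤ)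
    (φ' : Fin n → Fin r → ℤ)
    (hval : ∀ i k, φ' i k = -1 ∨ φ' i k = 0 ∨ φ' i k = 1)
    (hnz : ∀ i, ∃ k, φ' i k ≠ 0)
    (hflow : ∀ k : Fin r, bdry.mulVec (fun i => φ' i k) = 0)
    (y : Fin n → ℤ) (hy : ∀ i, y i = ∑ k : Fin r, φ' i k * 2 ^ (k : ℕ)) :
    ((bdry.map (Int.cast : ℤ → ZMod (2 ^ r))).mulVec (fun i => ((y i : ℤ) : ZMod (2 ^ r))) = 0)
      ∧ ∀ i, ((y i : ℤ) : ZMod (2 ^ r)) = 0 → ∀ k, φ' i k = 0 :=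
  stmt1_general n r bdry φ' hval hflow y hy
end

section
/- The number of nowhere-zero modular q-flows of a simplicial complex Δ equals the number of nowhere-zero modular q-flows of its suspension ΣΔ: Φ_Δ(q) = Φ_{ΣΔ}(q). -/
/-! Every top-dimensional cell of `ΣΔ` is a cone `t ∪ {a}` over a facet `t` of `Δ` with apex `a`
one of the two new vertices, since `Δ` has no cells of dimension `d + 1`. Its codimension-one cells
are the facets `t` themselves and the cones over the ridges of `Δ`. Row by row, the boundary
matrix of `ΣΔ` then says that `ψ` is a flow of `ΣΔ` iff its restrictions to the two families of
cones are flows of `Δ` whose sum vanishes on every facet. So `φ ↦ (φ, -φ)` is a bijection between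
the nowhere-zero flows of `Δ` and those of `ΣΔ`. -/

open Matrix

def csign {n : ℕ} (s r : Finset (Fin n)) : ℤ :=
  if r ⊆ s then (s \ r).sum (fun v => (-1 : ℤ) ^ ((s.filter (fun w => w < v)).card)) else 0

def kbnd {m : ℕ} (K : Finset (Finset (Fin m))) (k : ℕ) :
    Matrix {r : Finset (Fin m) // r ∈ K ∧ r.card = k - 1}
      {s : Finset (Fin m) // s ∈ K ∧ s.card = k} ℤ :=
  fun r s => csign s.1 r.1

noncomputable def kFlowCount {m : ℕ} (K : Finset (Finset (Fin m))) (d q : ℕ) : ℕ :=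
  Nat.card {φ : {s : Finset (Fin m) // s ∈ K ∧ s.card = d + 1} → ZMod q //
    ((kbnd K (d + 1)).map (Int.cast : ℤ → ZMod q)).mulVec φ = 0 ∧ ∀ s, φ s ≠ 0}

/-- Inclusion of the old vertices into the vertex set of the suspension. -/
def upSimp {m : ℕ} (s : Finset (Fin m)) : Finset (Fin (m + 2)) :=
  s.image (Fin.castLE (by omega))

/-- The suspension `ΣΔ`: simplices are `s`, `s ∪ {t}` and `s ∪ {b}` for simplices `s`
of `Δ`, where `t, b` are the two new suspension vertices. -/
def suspCx {m : ℕ} (K : Finset (Finset (Fin m))) : Finset (Finset (Fin (m + 2))) :=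
  K.image upSimp ∪
    K.image (fun s => insert (⟨m, by omega⟩ : Fin (m + 2)) (upSimp s)) ∪
    K.image (fun s => insert (⟨m + 1, by omega⟩ : Fin (m + 2)) (upSimp s))

section csign

variable {n : ℕ}

theorem csign_of_not_subset {s r : Finset (Fin n)} (h : ¬r ⊆ s) : csign s r = 0 := if_neg h

theorem csign_map {k : ℕ} (f : Fin n ↪o Fin k) (s r : Finset (Fin n)) :
    csign (s.map f.toEmbedding) (r.map f.toEmbedding) = csign s r := by
  unfold csign
  simp only [Finset.map_subset_map, ← Finset.map_sdiff, Finset.sum_map, Finset.filter_map,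
    Finset.card_map]
  congr! 5 with v - w
  exact f.lt_iff_lt

theorem csign_insert_self {x : Fin n} {s : Finset (Fin n)} (hs : ∀ y ∈ s, y < x) :
    csign (insert x s) s = (-1) ^ s.card := by
  have hx : x ∉ s := fun h => lt_irrefl x (hs x h)
  rw [csign, if_pos (Finset.subset_insert x s), Finset.insert_sdiff_of_notMem _ hx,
    Finset.sdiff_self, insert_empty_eq, Finset.sum_singleton, Finset.filter_insert,
    if_neg (lt_irrefl x), Finset.filter_true_of_mem hs]

theorem csign_insert_insert {x : Fin n} {s r : Finset (Fin n)} (hs : ∀ y ∈ s, y < x)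
    (hr : x ∉ r) : csign (insert x s) (insert x r) = csign s r := by
  have hx : x ∉ s := fun h => lt_irrefl x (hs x h)
  unfold csign
  by_cases hrs : r ⊆ s
  · rw [if_pos (Finset.insert_subset_insert x hrs), if_pos hrs, Finset.insert_sdiff_insert,
      Finset.sdiff_insert_of_notMem hx]
    refine Finset.sum_congr rfl fun v hv => ?_
    rw [Finset.filter_insert, if_neg (lt_asymm (hs v (Finset.mem_sdiff.1 hv).1))]
  · rw [if_neg hrs, if_neg]
    rwa [Finset.insert_subset_insert_iff hr]

theorem csign_insert_of_card_eq {x : Fin n} {s r : Finset (Fin n)} (hr : x ∉ r)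
    (hcard : r.card = s.card) (hne : r ≠ s) : csign (insert x s) r = 0 :=
  csign_of_not_subset fun h =>
    hne (Finset.eq_of_subset_of_card_le ((Finset.subset_insert_iff_of_notMem hr).1 h) hcard.ge)

end csign

abbrev Cell {n : ℕ} (K : Finset (Finset (Fin n))) (k : ℕ) :=
  {s : Finset (Fin n) // s ∈ K ∧ s.card = k}

def IsFlow {R : Type*} [Ring R] {n : ℕ} (K : Finset (Finset (Fin n))) (k : ℕ)
    (φ : Cell K k → R) : Prop :=
  ((kbnd K k).map (Int.cast : ℤ → R)).mulVec φ = 0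

theorem kbnd_map_mulVec_apply {R : Type*} [Ring R] {n k : ℕ} (K : Finset (Finset (Fin n)))
    (φ : Cell K k → R) (r : Cell K (k - 1)) :
    ((kbnd K k).map (Int.cast : ℤ → R)).mulVec φ r = ∑ s, (csign s.1 r.1 : R) * φ s :=
  rfl

namespace Suspension

variable {m : ℕ}

def apex : Bool → Fin (m + 2)
  | false => ⟨m, by omega⟩
  | true => ⟨m + 1, by omega⟩

theorem upSimp_eq_map (s : Finset (Fin m)) :
    upSimp s = s.map (Fin.castLEOrderEmb (by omega : m ≤ m + 2)).toEmbedding := by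
  rw [Finset.map_eq_image]
  rfl

theorem card_upSimp (s : Finset (Fin m)) : (upSimp s).card = s.card := by
  rw [upSimp_eq_map, Finset.card_map]

theorem upSimp_injective : Function.Injective (upSimp (m := m)) := fun s t h => by
  rw [upSimp_eq_map, upSimp_eq_map] at h
  exact Finset.map_injective _ h

theorem lt_apex_of_mem_upSimp {s : Finset (Fin m)} {y : Fin (m + 2)} (hy : y ∈ upSimp s)
    (b : Bool) : y < apex b := by
  obtain ⟨i, -, rfl⟩ := Finset.mem_image.1 hy
  cases b <;> simp [apex, Fin.lt_def]

theorem apex_notMem_upSimp (b : Bool) (s : Finset (Fin m)) : apex b ∉ upSimp s :=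
  fun h => lt_irrefl _ (lt_apex_of_mem_upSimp h b)

theorem apex_injective : Function.Injective (apex (m := m)) := by
  intro b b' h
  cases b <;> cases b' <;> simp_all [apex]

theorem card_insert_apex_upSimp (b : Bool) (s : Finset (Fin m)) :
    (insert (apex b) (upSimp s)).card = s.card + 1 := by
  rw [Finset.card_insert_of_notMem (apex_notMem_upSimp b s), card_upSimp]

theorem insert_apex_upSimp_inj {b b' : Bool} {s s' : Finset (Fin m)}
    (h : insert (apex b) (upSimp s) = insert (apex b') (upSimp s')) : b = b' ∧ s = s' := by
  have hb : b = b' := by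
    have hmem : apex b ∈ insert (apex b') (upSimp s') := h ▸ Finset.mem_insert_self _ _
    rcases Finset.mem_insert.1 hmem with hb | hb
    · exact apex_injective hb
    · exact absurd hb (apex_notMem_upSimp b s')
  subst hb
  refine ⟨rfl, upSimp_injective ?_⟩
  simpa only [Finset.erase_insert (apex_notMem_upSimp b _)] using congrArg (·.erase (apex b)) h

theorem mem_suspCx_iff {K : Finset (Finset (Fin m))} {s : Finset (Fin (m + 2))} :
    s ∈ suspCx K ↔ ∃ t ∈ K, s = upSimp t ∨ ∃ b, s = insert (apex b) (upSimp t) := by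
  simp only [suspCx, Finset.mem_union, Finset.mem_image, Bool.exists_bool, apex]
  aesop

theorem csign_cone_upSimp (b : Bool) {s r : Finset (Fin m)} (hcard : r.card = s.card) :
    csign (insert (apex b) (upSimp s)) (upSimp r) = if r = s then (-1) ^ s.card else 0 := by
  split_ifs with hrs
  · rw [hrs, csign_insert_self fun y hy => lt_apex_of_mem_upSimp hy b, card_upSimp]
  · exact csign_insert_of_card_eq (apex_notMem_upSimp b r)
      (by rw [card_upSimp, card_upSimp, hcard]) (upSimp_injective.ne hrs)

theorem csign_cone_cone (b b' : Bool) (s r : Finset (Fin m)) :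
    csign (insert (apex b') (upSimp s)) (insert (apex b) (upSimp r)) =
      if b = b' then csign s r else 0 := by
  split_ifs with hb
  · rw [hb, csign_insert_insert (fun y hy => lt_apex_of_mem_upSimp hy b')
      (apex_notMem_upSimp b' r), upSimp_eq_map, upSimp_eq_map, csign_map]
  · refine csign_of_not_subset fun h => ?_
    rcases Finset.mem_insert.1 (h (Finset.mem_insert_self _ _)) with h' | h'
    · exact hb (apex_injective h')
    · exact apex_notMem_upSimp b s h'

section cells

variable {K : Finset (Finset (Fin m))} {k : ℕ}

def upCell (t : Cell K k) : Cell (suspCx K) k :=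
  ⟨upSimp t.1, mem_suspCx_iff.2 ⟨t.1, t.2.1, .inl rfl⟩, by rw [card_upSimp, t.2.2]⟩

def cone (b : Bool) (t : Cell K k) : Cell (suspCx K) (k + 1) :=
  ⟨insert (apex b) (upSimp t.1), mem_suspCx_iff.2 ⟨t.1, t.2.1, .inr ⟨b, rfl⟩⟩,
    by rw [card_insert_apex_upSimp, t.2.2]⟩

theorem exists_upCell_or_cone_eq (s : Cell (suspCx K) (k + 1)) :
    (∃ t : Cell K (k + 1), upCell t = s) ∨ ∃ b, ∃ t : Cell K k, cone b t = s := by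
  obtain ⟨t, ht, hs | ⟨b, hs⟩⟩ := mem_suspCx_iff.1 s.2.1
  · have hcard : t.card = k + 1 := by rw [← card_upSimp, ← hs, s.2.2]
    exact .inl ⟨⟨t, ht, hcard⟩, Subtype.ext hs.symm⟩
  · have hcard : t.card = k := by
      have := s.2.2
      rw [hs, card_insert_apex_upSimp] at this
      omega
    exact .inr ⟨b, ⟨t, ht, hcard⟩, Subtype.ext hs.symm⟩

theorem cone_injective : Function.Injective fun p : Bool × Cell K k => cone p.1 p.2 := by
  rintro ⟨b, t⟩ ⟨b', t'⟩ h
  obtain ⟨rfl, h⟩ := insert_apex_upSimp_inj (congrArg Subtype.val h)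
  exact Prod.ext rfl (Subtype.ext h)

theorem cone_surjective (hdim : ∀ s ∈ K, s.card ≤ k) :
    Function.Surjective fun p : Bool × Cell K k => cone p.1 p.2 := by
  intro s
  rcases exists_upCell_or_cone_eq s with ⟨t, -⟩ | ⟨b, t, hs⟩
  · have := hdim t.1 t.2.1
    have := t.2.2
    omega
  · exact ⟨(b, t), hs⟩

noncomputable def coneEquiv (hdim : ∀ s ∈ K, s.card ≤ k) :
    Bool × Cell K k ≃ Cell (suspCx K) (k + 1) :=
  .ofBijective _ ⟨cone_injective, cone_surjective hdim⟩

theorem sum_cells_suspCx {M : Type*} [AddCommMonoid M] (hdim : ∀ s ∈ K, s.card ≤ k)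
    (f : Cell (suspCx K) (k + 1) → M) : ∑ s, f s = ∑ b, ∑ t, f (cone b t) := by
  rw [← (coneEquiv hdim).sum_comp, Fintype.sum_prod_type]
  rfl

end cells

section flows

variable {R : Type*} [Ring R]

variable {K : Finset (Finset (Fin m))} {d : ℕ}

theorem kbnd_suspCx_mulVec_upCell (hdim : ∀ s ∈ K, s.card ≤ d + 1)
    (ψ : Cell (suspCx K) (d + 1 + 1) → R) (t : Cell K (d + 1)) :
    ((kbnd (suspCx K) (d + 1 + 1)).map (Int.cast : ℤ → R)).mulVec ψ (upCell t) =
      (-1) ^ (d + 1) * ∑ b, ψ (cone b t) := by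
  rw [kbnd_map_mulVec_apply, sum_cells_suspCx hdim, Finset.mul_sum]
  refine Finset.sum_congr rfl fun b _ => ?_
  rw [Finset.sum_eq_single t]
  · rw [cone, upCell, csign_cone_upSimp b rfl, if_pos rfl, t.2.2]
    push_cast
    rfl
  · intro t' _ hne
    rw [cone, upCell, csign_cone_upSimp b (t.2.2.trans t'.2.2.symm),
      if_neg fun h => hne (Subtype.ext h).symm]
    simp
  · simp

theorem kbnd_suspCx_mulVec_cone (hdim : ∀ s ∈ K, s.card ≤ d + 1)
    (ψ : Cell (suspCx K) (d + 1 + 1) → R) (b : Bool) (r : Cell K d) :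
    ((kbnd (suspCx K) (d + 1 + 1)).map (Int.cast : ℤ → R)).mulVec ψ (cone b r) =
      ((kbnd K (d + 1)).map (Int.cast : ℤ → R)).mulVec (ψ ∘ cone b) r := by
  rw [kbnd_map_mulVec_apply, kbnd_map_mulVec_apply, sum_cells_suspCx hdim,
    Finset.sum_eq_single b]
  · simp only [cone, csign_cone_cone]
    rfl
  · intro b' _ hb
    simp [cone, csign_cone_cone, Ne.symm hb]
  · simp

theorem isFlow_suspCx_iff (hdim : ∀ s ∈ K, s.card ≤ d + 1)
    (ψ : Cell (suspCx K) (d + 1 + 1) → R) :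
    IsFlow (suspCx K) (d + 1 + 1) ψ ↔
      (∀ b, IsFlow K (d + 1) (ψ ∘ cone b)) ∧ ∀ t, ∑ b, ψ (cone b t) = 0 := by
  constructor
  · intro hψ
    refine ⟨fun b => funext fun r => ?_, fun t => ?_⟩
    · rw [← kbnd_suspCx_mulVec_cone hdim, hψ]
      rfl
    · have h := congrFun hψ (upCell t)
      rwa [kbnd_suspCx_mulVec_upCell hdim, Pi.zero_apply,
        ((isUnit_neg_one (α := R)).pow _).mul_right_eq_zero] at h
  · rintro ⟨hcone, hsum⟩
    funext r
    rcases exists_upCell_or_cone_eq (k := d) r with ⟨t, rfl⟩ | ⟨b, r, rfl⟩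
    · rw [kbnd_suspCx_mulVec_upCell hdim, hsum, mul_zero]
      rfl
    · rw [kbnd_suspCx_mulVec_cone hdim, hcone b]
      rfl

variable {k : ℕ}

noncomputable def suspLift (hdim : ∀ s ∈ K, s.card ≤ k) (φ : Cell K k → R) :
    Cell (suspCx K) (k + 1) → R :=
  (fun p : Bool × Cell K k => bif p.1 then -φ p.2 else φ p.2) ∘ (coneEquiv hdim).symm

theorem suspLift_cone (hdim : ∀ s ∈ K, s.card ≤ k) (φ : Cell K k → R) (b : Bool)
    (t : Cell K k) : suspLift hdim φ (cone b t) = bif b then -φ t else φ t := by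
  have h : (coneEquiv hdim).symm (cone b t) = (b, t) := (coneEquiv hdim).symm_apply_apply (b, t)
  simp only [suspLift, Function.comp_apply, h]

theorem suspLift_ne_zero (hdim : ∀ s ∈ K, s.card ≤ k) {φ : Cell K k → R} (hφ : ∀ t, φ t ≠ 0)
    (s : Cell (suspCx K) (k + 1)) : suspLift hdim φ s ≠ 0 := by
  obtain ⟨⟨b, t⟩, rfl⟩ := cone_surjective hdim s
  cases b <;> simpa [suspLift_cone] using hφ t

theorem isFlow_suspLift (hdim : ∀ s ∈ K, s.card ≤ d + 1) {φ : Cell K (d + 1) → R}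
    (hφ : IsFlow K (d + 1) φ) : IsFlow (suspCx K) (d + 1 + 1) (suspLift hdim φ) := by
  refine (isFlow_suspCx_iff hdim _).2 ⟨fun b => ?_, fun t => ?_⟩
  · cases b
    · convert hφ using 1
      exact funext fun t => suspLift_cone hdim φ false t
    · have h : suspLift hdim φ ∘ cone true = -φ := funext fun t => suspLift_cone hdim φ true t
      rw [IsFlow, h, Matrix.mulVec_neg, hφ, neg_zero]
  · simp [suspLift_cone]

noncomputable def nowhereZeroFlowEquiv (hdim : ∀ s ∈ K, s.card ≤ d + 1) :
    {φ : Cell K (d + 1) → R // IsFlow K (d + 1) φ ∧ ∀ t, φ t ≠ 0} ≃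
      {ψ : Cell (suspCx K) (d + 1 + 1) → R // IsFlow (suspCx K) (d + 1 + 1) ψ ∧ ∀ s, ψ s ≠ 0}
    where
  toFun φ := ⟨suspLift hdim φ.1, isFlow_suspLift hdim φ.2.1, suspLift_ne_zero hdim φ.2.2⟩
  invFun ψ := ⟨ψ.1 ∘ cone false, ((isFlow_suspCx_iff hdim _).1 ψ.2.1).1 false, fun t => ψ.2.2 _⟩
  left_inv φ := Subtype.ext <| funext fun t => suspLift_cone hdim φ.1 false t
  right_inv ψ := by
    refine Subtype.ext <| funext fun s => ?_
    obtain ⟨⟨b, t⟩, rfl⟩ := cone_surjective hdim s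
    have hsum := ((isFlow_suspCx_iff hdim _).1 ψ.2.1).2 t
    rw [Fintype.sum_bool] at hsum
    cases b
    · exact suspLift_cone hdim _ false t
    · exact (suspLift_cone hdim _ true t).trans (eq_neg_of_add_eq_zero_left hsum).symm

end flows

end Suspension

theorem stmt2_general {m : ℕ} (K : Finset (Finset (Fin m))) (d q : ℕ)
    (hdim : ∀ s ∈ K, s.card ≤ d + 1) :
    kFlowCount K d q = kFlowCount (suspCx K) (d + 1) q :=
  Nat.card_congr (Suspension.nowhereZeroFlowEquiv hdim)

/-- Lemma 4.2: `Φ_Δ(q) = Φ_{ΣΔ}(q)` for a `d`-dimensional simplicial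
complex `Δ` and its suspension `ΣΔ` (a `(d+1)`-dimensional complex). -/
theorem stmt2 {m : ℕ} (K : Finset (Finset (Fin m))) (d q : ℕ)
    (hK : ∀ s ∈ K, ∀ t ⊆ s, t ∈ K)
    (hdim : ∀ s ∈ K, s.card ≤ d + 1) :
    kFlowCount K d q = kFlowCount (suspCx K) (d + 1) q :=
  stmt2_general K d q hdim
end

section
/- The number of nowhere-zero modular q-flows of the complete d-dimensional simplicial complex on n = d+3 vertices, K_n^{n-2}, equals the falling factorial ∏_{i=1}^{n-1} (q - i). -/
open Matrix

/-- Boundary matrix of the complete complex `K_n^k` (facets: `k`-subsets of the `n`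
vertices, ridges: `(k-1)`-subsets). -/
def cbnd (n k : ℕ) :
    Matrix {r : Finset (Fin n) // r.card = k - 1} {s : Finset (Fin n) // s.card = k} ℤ :=
  fun r s => csign s.1 r.1

/-- Number of nowhere-zero modular `q`-flows of an integer matrix. -/
noncomputable def mFlowCount {R F : Type} [Fintype R] [Fintype F]
    (B : Matrix R F ℤ) (q : ℕ) : ℕ :=
  Nat.card {φ : F → ZMod q //
    (B.map (Int.cast : ℤ → ZMod q)).mulVec φ = 0 ∧ ∀ f, φ f ≠ 0}

/-!
Facets of `K_n^{n-2}` are the complements `{a, b}ᶜ` of edges of the complete graph on `Fin n`,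
and ridges are the complements `{a, b, c}ᶜ` of its triangles. For `a < b < c` the boundary
row of the ridge `{a, b, c}ᶜ` is `(-1)^a φ(bc) - (-1)^b φ(ac) + (-1)^c φ(ab)`, so after the
twist `ψ(ab) = (-1)^(a+b) φ(ab)` a flow is exactly a `1`-cocycle of the complete graph, i.e.
`ψ(ab) = h b - h a` for a unique potential `h` with `h 0 = 0`. The flow is nowhere zero iff
`h` is injective, and such `h` are the injections of the `n - 1` nonzero vertices into the
`q - 1` nonzero residues.
-/

open Finset Function

section

variable {α β : Type*}

lemma exists_lt_eq_of_card_eq_two [LinearOrder α] {t : Finset α} (ht : #t = 2) :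
    ∃ a b, a < b ∧ t = {a, b} := by
  refine ⟨t.orderEmbOfFin ht 0, t.orderEmbOfFin ht 1,
    (t.orderEmbOfFin ht).strictMono (by decide), ?_⟩
  rw [← coe_inj, ← t.range_orderEmbOfFin ht]
  ext x
  simp only [Set.mem_range, Fin.exists_fin_succ, IsEmpty.exists_iff, coe_insert, coe_singleton,
    Set.mem_insert_iff, Set.mem_singleton_iff, or_false, eq_comm]
  rfl

lemma exists_lt_lt_eq_of_card_eq_three [LinearOrder α] {t : Finset α} (ht : #t = 3) :
    ∃ a b c, a < b ∧ b < c ∧ t = {a, b, c} := by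
  refine ⟨t.orderEmbOfFin ht 0, t.orderEmbOfFin ht 1, t.orderEmbOfFin ht 2,
    (t.orderEmbOfFin ht).strictMono (by decide), (t.orderEmbOfFin ht).strictMono (by decide), ?_⟩
  rw [← coe_inj, ← t.range_orderEmbOfFin ht]
  ext x
  simp only [Set.mem_range, Fin.exists_fin_succ, IsEmpty.exists_iff, coe_insert, coe_singleton,
    Set.mem_insert_iff, Set.mem_singleton_iff, or_false, eq_comm]
  rfl

def subtypeInjectiveApplyEqEquiv [DecidableEq α] (a₀ : α) (b₀ : β) :
    {h : α → β // h a₀ = b₀ ∧ Injective h} ≃ ({a // a ≠ a₀} ↪ {b // b ≠ b₀}) where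
  toFun h := ⟨fun a => ⟨h.1 a, fun e => a.2 (h.2.2 (e.trans h.2.1.symm))⟩,
    fun a a' e => Subtype.ext (h.2.2 (congrArg Subtype.val e))⟩
  invFun f := ⟨fun a => if ha : a = a₀ then b₀ else f ⟨a, ha⟩, dif_pos rfl, by
    intro a a' e
    by_cases ha : a = a₀ <;> by_cases ha' : a' = a₀ <;>
      simp only [ha, ha', dite_true, dite_false] at e
    · exact ha.trans ha'.symm
    · exact absurd e.symm (f _).2
    · exact absurd e (f _).2
    · exact congrArg Subtype.val (f.injective (Subtype.ext e))⟩
  left_inv h := Subtype.ext <| funext fun a => by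
    by_cases ha : a = a₀
    · simp [ha, h.2.1]
    · exact dif_neg ha
  right_inv f := by ext a; simp [a.2]

lemma card_subtype_injective_apply_eq [Fintype α] [Fintype β] (a₀ : α) (b₀ : β) :
    Nat.card {h : α → β // h a₀ = b₀ ∧ Injective h} =
      (Fintype.card β - 1).descFactorial (Fintype.card α - 1) := by
  classical
  rw [Nat.card_congr (subtypeInjectiveApplyEqEquiv a₀ b₀), Nat.card_eq_fintype_card,
    Fintype.card_embedding_eq, Fintype.card_subtype_compl, Fintype.card_subtype_compl,
    Fintype.card_subtype_eq, Fintype.card_subtype_eq]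

lemma natCast_descFactorial_sub_one {q : ℕ} (hq : 1 ≤ q) (k : ℕ) :
    ((q - 1).descFactorial k : ℤ) = ∏ i ∈ Icc 1 k, ((q : ℤ) - i) := by
  rw [← descPochhammer_eval_eq_descFactorial, descPochhammer_eval_eq_prod_range,
    ← Ico_add_one_right_eq_Icc, prod_Ico_eq_prod_range, Nat.add_sub_cancel, Nat.cast_sub hq]
  refine prod_congr rfl fun i _ => ?_
  push_cast
  ring

end

namespace CompleteComplex

abbrev Facet (n : ℕ) := {s : Finset (Fin n) // #s = n - 2}
abbrev Ridge (n : ℕ) := {r : Finset (Fin n) // #r = n - 2 - 1}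

variable {n : ℕ} {a b c : Fin n}

lemma csign_insert {r : Finset (Fin n)} {v : Fin n} (hv : v ∉ r) :
    csign (insert v r) r = (-1) ^ #{w ∈ r | w < v} := by
  rw [csign, if_pos (subset_insert v r), insert_sdiff_cancel hv, sum_singleton, filter_insert,
    if_neg (lt_irrefl v)]

lemma card_filter_compl_lt_add_card_filter_lt (t : Finset (Fin n)) (v : Fin n) :
    #{w ∈ tᶜ | w < v} + #{w ∈ t | w < v} = v := by
  have hcompl : {w ∈ tᶜ | w < v} = Iio v \ t := by ext; simp [and_comm]
  have hself : {w ∈ t | w < v} = Iio v ∩ t := by ext; simp [and_comm]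
  rw [hcompl, hself, card_sdiff_add_card_inter, Fin.card_Iio]

lemma neg_one_pow_card_filter_compl_lt {M : Type*} [Monoid M] [HasDistribNeg M]
    (t : Finset (Fin n)) (v : Fin n) :
    (-1 : M) ^ #{w ∈ tᶜ | w < v} = (-1) ^ (v : ℕ) * (-1) ^ #{w ∈ t | w < v} := by
  rw [← card_filter_compl_lt_add_card_filter_lt t v, pow_add, mul_assoc, ← pow_add, ← two_mul,
    pow_mul, neg_one_sq, one_pow, mul_one]

def edgeFacet (hab : a < b) : Facet n :=
  ⟨{a, b}ᶜ, by rw [card_compl, card_pair hab.ne, Fintype.card_fin]⟩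

def triangleRidge (hab : a < b) (hbc : b < c) : Ridge n :=
  ⟨{a, b, c}ᶜ, by
    rw [card_compl, card_insert_of_notMem (by simp [hab.ne, (hab.trans hbc).ne]),
      card_pair hbc.ne, Fintype.card_fin]
    omega⟩

lemma mem_edgeFacet {hab : a < b} {x : Fin n} : x ∈ (edgeFacet hab).1 ↔ x ≠ a ∧ x ≠ b := by
  simp [edgeFacet]

lemma exists_eq_edgeFacet (hn : 2 ≤ n) (s : Facet n) :
    ∃ a b : Fin n, ∃ hab : a < b, s = edgeFacet hab := by
  obtain ⟨a, b, hab, hs⟩ := exists_lt_eq_of_card_eq_two (t := s.1ᶜ)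
    (by rw [card_compl, s.2, Fintype.card_fin]; omega)
  exact ⟨a, b, hab, Subtype.ext (compl_eq_comm.mp hs).symm⟩

lemma exists_eq_triangleRidge (hn : 3 ≤ n) (r : Ridge n) :
    ∃ a b c : Fin n, ∃ (hab : a < b) (hbc : b < c), r = triangleRidge hab hbc := by
  obtain ⟨a, b, c, hab, hbc, hr⟩ := exists_lt_lt_eq_of_card_eq_three (t := r.1ᶜ)
    (by rw [card_compl, r.2, Fintype.card_fin]; omega)
  exact ⟨a, b, c, hab, hbc, Subtype.ext (compl_eq_comm.mp hr).symm⟩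

lemma edgeFacet_eq_insert_triangleRidge (hab : a < b) (hbc : b < c) :
    (edgeFacet hbc).1 = insert a (triangleRidge hab hbc).1 ∧
      (edgeFacet (hab.trans hbc)).1 = insert b (triangleRidge hab hbc).1 ∧
      (edgeFacet hab).1 = insert c (triangleRidge hab hbc).1 := by
  refine ⟨?_, ?_, ?_⟩ <;> ext x <;> simp [mem_edgeFacet, triangleRidge] <;> grind

lemma eq_edgeFacet_of_triangleRidge_subset (hab : a < b) (hbc : b < c) {s : Facet n}
    (hs : (triangleRidge hab hbc).1 ⊆ s.1) :
    s = edgeFacet hbc ∨ s = edgeFacet (hab.trans hbc) ∨ s = edgeFacet hab := by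
  have hcard : #(triangleRidge hab hbc).1 + 1 = #s.1 := by
    have : (c : ℕ) < n := c.2
    rw [(triangleRidge hab hbc).2, s.2]
    omega
  obtain ⟨v, hv, hsv⟩ := exists_eq_insert_iff.2 ⟨hs, hcard⟩
  obtain ⟨ha, hb, hc⟩ := edgeFacet_eq_insert_triangleRidge hab hbc
  simp only [triangleRidge, notMem_compl, mem_insert, mem_singleton] at hv
  rcases hv with rfl | rfl | rfl
  · exact .inl (Subtype.ext (hsv.symm.trans ha.symm))
  · exact .inr (.inl (Subtype.ext (hsv.symm.trans hb.symm)))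
  · exact .inr (.inr (Subtype.ext (hsv.symm.trans hc.symm)))

variable {R : Type*} [CommRing R]

lemma cbnd_mulVec_triangleRidge (φ : Facet n → R) (hab : a < b) (hbc : b < c) :
    ((cbnd n (n - 2)).map (Int.cast : ℤ → R)).mulVec φ (triangleRidge hab hbc) =
      (-1) ^ (a : ℕ) * φ (edgeFacet hbc) - (-1) ^ (b : ℕ) * φ (edgeFacet (hab.trans hbc))
        + (-1) ^ (c : ℕ) * φ (edgeFacet hab) := by
  have hac := hab.trans hbc
  set r := triangleRidge hab hbc
  have hne₁ : edgeFacet hbc ∉ ({edgeFacet hac, edgeFacet hab} : Finset (Facet n)) := by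
    simp only [mem_insert, mem_singleton, not_or]
    exact ⟨fun h => absurd (congrArg (a ∈ ·.1) h) (by simp [mem_edgeFacet, hab.ne, hac.ne]),
      fun h => absurd (congrArg (a ∈ ·.1) h) (by simp [mem_edgeFacet, hab.ne, hac.ne])⟩
  have hne₂ : edgeFacet hac ≠ edgeFacet hab :=
    fun h => absurd (congrArg (b ∈ ·.1) h) (by simp [mem_edgeFacet, hab.ne', hbc.ne])
  have hvanish : ∀ s ∉ ({edgeFacet hbc, edgeFacet hac, edgeFacet hab} : Finset (Facet n)),
      (csign s.1 r.1 : R) * φ s = 0 := by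
    intro s hs
    rw [csign, if_neg fun h => hs (by simpa using eq_edgeFacet_of_triangleRidge_subset hab hbc h),
      Int.cast_zero, zero_mul]
  obtain ⟨ha, hb, hc⟩ := edgeFacet_eq_insert_triangleRidge hab hbc
  have hnot : a ∉ r.1 ∧ b ∉ r.1 ∧ c ∉ r.1 := by simp [r, triangleRidge]
  have hlt_a : #{w ∈ ({a, b, c} : Finset (Fin n)) | w < a} = 0 := by
    simp [filter_insert, filter_singleton, hab.not_gt, hac.not_gt]
  have hlt_b : #{w ∈ ({a, b, c} : Finset (Fin n)) | w < b} = 1 := by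
    simp [filter_insert, filter_singleton, hab, hbc.not_gt]
  have hlt_c : #{w ∈ ({a, b, c} : Finset (Fin n)) | w < c} = 2 := by
    simp [filter_insert, filter_singleton, hac, hbc, card_pair hab.ne]
  calc ((cbnd n (n - 2)).map (Int.cast : ℤ → R)).mulVec φ r
      = ∑ s : Facet n, (csign s.1 r.1 : R) * φ s := by
        simp [Matrix.mulVec, dotProduct, cbnd]
    _ = ∑ s ∈ {edgeFacet hbc, edgeFacet hac, edgeFacet hab}, (csign s.1 r.1 : R) * φ s :=
        (sum_subset (subset_univ _) fun s _ hs => hvanish s hs).symm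
    _ = _ := by
        rw [sum_insert hne₁, sum_pair hne₂, ha, hb, hc, csign_insert hnot.1,
          csign_insert hnot.2.1, csign_insert hnot.2.2]
        push_cast
        simp only [r, triangleRidge, neg_one_pow_card_filter_compl_lt, hlt_a, hlt_b, hlt_c]
        ring

def IsFlow (φ : Facet n → R) : Prop :=
  ((cbnd n (n - 2)).map (Int.cast : ℤ → R)).mulVec φ = 0

-- A sum over the two-element complement of `s`, so that no order of its elements is chosen.
def ofPotential (h : Fin n → R) (s : Facet n) : R :=
  (-1) ^ (∑ v ∈ s.1ᶜ, (v : ℕ)) * ∑ v ∈ s.1ᶜ, (-1) ^ (#{w ∈ s.1ᶜ | w < v} + 1) * h v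

lemma ofPotential_edgeFacet (h : Fin n → R) (hab : a < b) :
    ofPotential h (edgeFacet hab) = (-1) ^ (a + b : ℕ) * (h b - h a) := by
  have hcompl : (edgeFacet hab).1ᶜ = {a, b} := compl_compl _
  have hlt_a : #{w ∈ ({a, b} : Finset (Fin n)) | w < a} = 0 := by
    simp [filter_insert, filter_singleton, hab.not_gt]
  have hlt_b : #{w ∈ ({a, b} : Finset (Fin n)) | w < b} = 1 := by
    simp [filter_insert, filter_singleton, hab]
  rw [ofPotential, hcompl, sum_pair hab.ne, sum_pair hab.ne, hlt_a, hlt_b]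
  ring

lemma isFlow_ofPotential (hn : 3 ≤ n) (h : Fin n → R) : IsFlow (ofPotential h) := by
  funext r
  obtain ⟨a, b, c, hab, hbc, rfl⟩ := exists_eq_triangleRidge hn r
  rw [cbnd_mulVec_triangleRidge, ofPotential_edgeFacet, ofPotential_edgeFacet,
    ofPotential_edgeFacet, Pi.zero_apply]
  simp only [pow_add]
  ring

lemma forall_ofPotential_ne_zero_iff (hn : 2 ≤ n) (h : Fin n → R) :
    (∀ s, ofPotential h s ≠ 0) ↔ Injective h := by
  refine ⟨fun hnz => Injective.of_lt_imp_ne fun a b hab heq => hnz (edgeFacet hab) ?_,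
    fun hinj s => ?_⟩
  · rw [ofPotential_edgeFacet, heq, sub_self, mul_zero]
  · obtain ⟨a, b, hab, rfl⟩ := exists_eq_edgeFacet hn s
    rw [ofPotential_edgeFacet, (isUnit_neg_one.pow _).mul_right_eq_zero.ne, sub_ne_zero]
    exact hinj.ne hab.ne'

variable [NeZero n]

def potential (φ : Facet n → R) (v : Fin n) : R :=
  if hv : v = 0 then 0 else (-1) ^ (v : ℕ) * φ (edgeFacet (Fin.pos_iff_ne_zero.2 hv))

lemma potential_ofPotential {h : Fin n → R} (h0 : h 0 = 0) : potential (ofPotential h) = h := by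
  funext v
  by_cases hv : v = 0
  · rw [potential, dif_pos hv, hv, h0]
  · rw [potential, dif_neg hv, ofPotential_edgeFacet, h0, sub_zero, ← mul_assoc, ← pow_add,
      Fin.val_zero, zero_add, Even.neg_one_pow ⟨v, rfl⟩, one_mul]

lemma ofPotential_potential {φ : Facet n → R} (hn : 2 ≤ n) (hφ : IsFlow φ) :
    ofPotential (potential φ) = φ := by
  funext s
  obtain ⟨a, b, hab, rfl⟩ := exists_eq_edgeFacet hn s
  have hb : b ≠ 0 := ((Fin.zero_le a).trans_lt hab).ne'
  have hsq (k : ℕ) : ((-1 : R) ^ k) ^ 2 = 1 := by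
    rw [← pow_mul, Even.neg_one_pow ⟨k, by ring⟩]
  rw [ofPotential_edgeFacet, potential, potential, dif_neg hb]
  by_cases ha : a = 0
  · subst ha
    rw [dif_pos rfl, sub_zero, Fin.val_zero, zero_add, ← mul_assoc, ← sq, hsq, one_mul]
  · have h0a : 0 < a := Fin.pos_iff_ne_zero.2 ha
    have hrow := congrFun hφ (triangleRidge h0a hab)
    rw [cbnd_mulVec_triangleRidge] at hrow
    simp only [Pi.zero_apply, Fin.val_zero, pow_zero, one_mul] at hrow
    rw [dif_neg ha, pow_add]
    linear_combination ((-1 : R) ^ (a : ℕ) * φ (edgeFacet (h0a.trans hab))) * hsq b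
      - ((-1 : R) ^ (b : ℕ) * φ (edgeFacet h0a)) * hsq a - hrow

def nowhereZeroFlowEquiv (hn : 3 ≤ n) :
    {φ : Facet n → R // IsFlow φ ∧ ∀ s, φ s ≠ 0} ≃ {h : Fin n → R // h 0 = 0 ∧ Injective h} where
  toFun φ := ⟨potential φ.1, dif_pos rfl, (forall_ofPotential_ne_zero_iff (by omega) _).1
    ((ofPotential_potential (by omega) φ.2.1).symm ▸ φ.2.2)⟩
  invFun h := ⟨ofPotential h.1, isFlow_ofPotential hn h.1,
    (forall_ofPotential_ne_zero_iff (by omega) _).2 h.2.2⟩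
  left_inv φ := Subtype.ext (ofPotential_potential (by omega) φ.2.1)
  right_inv h := Subtype.ext (potential_ofPotential h.2.1)

end CompleteComplex

/-- Proposition 4.3: the number of nowhere-zero modular `q`-flows of
the complete `(n-3)`-dimensional complex `K_n^{n-2}` is `∏_{i=1}^{n-1} (q - i)`. -/
theorem stmt4 (n q : ℕ) (hn : 4 ≤ n) (hq : 1 ≤ q) :
    (mFlowCount (cbnd n (n - 2)) q : ℤ) = ∏ i ∈ Finset.Icc 1 (n - 1), ((q : ℤ) - i) := by
  have : NeZero n := ⟨by omega⟩
  have : NeZero q := ⟨by omega⟩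
  have hcount : mFlowCount (cbnd n (n - 2)) q = (q - 1).descFactorial (n - 1) := by
    refine (Nat.card_congr
      (CompleteComplex.nowhereZeroFlowEquiv (R := ZMod q) (by omega))).trans ?_
    rw [card_subtype_injective_apply_eq, ZMod.card, Fintype.card_fin]
  rw [hcount, natCast_descFactorial_sub_one hq]
end

section
/- A nowhere-zero vector ψ ∈ Z_q^{n-1} satisfies that ∂(K_{n-1}^{n-2})ψ^T has every entry nonzero mod q if and only if all entries ψ_1,...,ψ_{n-1} are nonzero and pairwise distinct mod q. Consequently the number of such ψ is (q-1)(q-2)···(q-(n-1)). -/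
open Matrix

/-- Reorientation sign of a facet of `∂Δ^{n-2}`: `(-1)^a` where `a` is the missing
vertex.  With this standard orientation every row of the boundary matrix of
`K_{n-1}^{n-2}` has exactly two nonzero entries `±1` of opposite sign. -/
def osign {n : ℕ} (s : Finset (Fin n)) : ℤ := ∑ v ∈ sᶜ, (-1 : ℤ) ^ (v : ℕ)

/-- The boundary matrix of `K_{n-1}^{n-2}` (the boundary of the `(n-2)`-simplex,
a triangulation of `S^{n-3}`), with the standard orientation, reduced mod `q`. -/
def obnd (n q : ℕ) :
    Matrix {r : Finset (Fin (n - 1)) // r.card = n - 2 - 1}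
      {s : Finset (Fin (n - 1)) // s.card = n - 2} (ZMod q) :=
  fun r s => ((osign s.1 * cbnd (n - 1) (n - 2) r s : ℤ) : ZMod q)

/-!
The ridge `{a, b}ᶜ` of `∂Δ` lies in exactly the two facets `{a}ᶜ` and `{b}ᶜ`, with incidence
signs that become opposite once the facets are reoriented by `osign`; hence
`(∂ψ)({a, b}ᶜ) = ±(ψ({b}ᶜ) - ψ({a}ᶜ))`. Since any two distinct facets meet in a ridge, `∂ψ` is
nowhere zero iff `ψ` is injective, so the vectors in question are the injections from the `n - 1`
facets into `ℤ/q ∖ {0}`, of which there are `(q - 1)(q - 2)⋯(q - (n - 1))`.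
-/

open Finset

section Simplex

variable {m : ℕ}

lemma exists_eq_compl_singleton {s : Finset (Fin m)} (hs : #s + 1 = m) : ∃ a, s = {a}ᶜ := by
  obtain ⟨a, ha⟩ := card_eq_one.mp (show #sᶜ = 1 by rw [card_compl, Fintype.card_fin]; omega)
  exact ⟨a, by rw [← ha, compl_compl]⟩

lemma exists_eq_compl_pair {r : Finset (Fin m)} (hr : #r + 2 = m) :
    ∃ a b, a ≠ b ∧ r = {a, b}ᶜ := by
  obtain ⟨a, b, hab, h⟩ := card_eq_two.mp (show #rᶜ = 2 by rw [card_compl, Fintype.card_fin]; omega)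
  exact ⟨a, b, hab, by rw [← h, compl_compl]⟩

lemma eq_compl_singleton_of_compl_pair_subset {a b : Fin m} {s : Finset (Fin m)}
    (hs : #s + 1 = m) (h : {a, b}ᶜ ⊆ s) : s = {a}ᶜ ∨ s = {b}ᶜ := by
  obtain ⟨x, rfl⟩ := exists_eq_compl_singleton hs
  have hx : x ∈ ({a, b} : Finset (Fin m)) := by simpa using compl_subset_compl.mp h
  rcases mem_insert.mp hx with rfl | hx
  · exact Or.inl rfl
  · exact Or.inr (by rw [mem_singleton.mp hx])

lemma insert_compl_pair {a b : Fin m} (hab : a ≠ b) :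
    insert a ({a, b}ᶜ : Finset (Fin m)) = {b}ᶜ := by
  ext w
  by_cases hw : w = a <;> simp_all

lemma osign_compl_singleton (a : Fin m) : osign ({a}ᶜ : Finset (Fin m)) = (-1) ^ (a : ℕ) := by
  rw [osign, compl_compl, sum_singleton]

lemma csign_insert_self_s8 {r : Finset (Fin m)} {a : Fin m} (ha : a ∉ r) :
    csign (insert a r) r = (-1) ^ #{w ∈ r | w < a} := by
  rw [csign, if_pos (subset_insert a r), insert_sdiff_cancel ha, sum_singleton, filter_insert,
    if_neg (lt_irrefl a)]

lemma card_filter_lt_add_card_filter_compl_lt (r : Finset (Fin m)) (c : Fin m) :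
    #{w ∈ r | w < c} + #{w ∈ rᶜ | w < c} = c := by
  rw [← card_union_of_disjoint (disjoint_filter_filter disjoint_compl_right), ← filter_union,
    union_compl, ← Fin.card_Iio]
  congr 1
  ext w
  simp

lemma osign_mul_csign_compl_pair {a b : Fin m} (hab : a ≠ b) :
    osign ({b}ᶜ : Finset (Fin m)) * csign {b}ᶜ {a, b}ᶜ =
      (-1) ^ ((a : ℕ) + b) * if b < a then -1 else 1 := by
  have hcount := card_filter_lt_add_card_filter_compl_lt ({a, b}ᶜ : Finset (Fin m)) a
  rw [compl_compl, filter_insert, if_neg (lt_irrefl a), filter_singleton] at hcount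
  rw [osign_compl_singleton, ← insert_compl_pair hab, csign_insert_self_s8 (by simp)]
  split_ifs at hcount ⊢ with hba
  · rw [card_singleton] at hcount
    rw [← hcount, pow_add, pow_add]
    ring
  · rw [card_empty, add_zero] at hcount
    rw [hcount, pow_add]
    ring

end Simplex

section Boundary

variable {n q : ℕ} (ψ : {s : Finset (Fin (n - 1)) // #s = n - 2} → ZMod q)

lemma obnd_mulVec_compl_pair {a b : Fin (n - 1)} (hab : a < b) (hr : #({a, b}ᶜ) = n - 2 - 1)
    (ha : #({a}ᶜ) = n - 2) (hb : #({b}ᶜ) = n - 2) :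
    (obnd n q *ᵥ ψ) ⟨{a, b}ᶜ, hr⟩ = (-1) ^ ((a : ℕ) + b) * (ψ ⟨{b}ᶜ, hb⟩ - ψ ⟨{a}ᶜ, ha⟩) := by
  rw [mulVec, dotProduct, Fintype.sum_eq_add ⟨{b}ᶜ, hb⟩ ⟨{a}ᶜ, ha⟩ (by simpa using hab.ne')]
  · simp only [obnd, cbnd]
    rw [osign_mul_csign_compl_pair hab.ne, pair_comm, osign_mul_csign_compl_pair hab.ne',
      if_neg (lt_asymm hab), if_pos hab]
    push_cast
    ring
  · rintro ⟨s, hs⟩ ⟨hsb, hsa⟩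
    have hns : ¬ {a, b}ᶜ ⊆ s := fun hsub =>
      (eq_compl_singleton_of_compl_pair_subset (by have := b.isLt; omega) hsub).elim
        (fun h => hsa (Subtype.ext h)) (fun h => hsb (Subtype.ext h))
    have hzero : csign s {a, b}ᶜ = 0 := if_neg hns
    simp only [obnd, cbnd, hzero, mul_zero, Int.cast_zero, zero_mul]

lemma obnd_mulVec_compl_pair_ne_zero_iff {a b : Fin (n - 1)} (hab : a ≠ b)
    (hr : #({a, b}ᶜ) = n - 2 - 1) (ha : #({a}ᶜ) = n - 2) (hb : #({b}ᶜ) = n - 2) :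
    (obnd n q *ᵥ ψ) ⟨{a, b}ᶜ, hr⟩ ≠ 0 ↔ ψ ⟨{a}ᶜ, ha⟩ ≠ ψ ⟨{b}ᶜ, hb⟩ := by
  have hunit : ∀ k : ℕ, IsUnit ((-1 : ZMod q) ^ k) := fun k => isUnit_one.neg.pow k
  rcases hab.lt_or_gt with h | h
  · rw [obnd_mulVec_compl_pair ψ h, Ne, (hunit _).mul_right_eq_zero, sub_eq_zero, eq_comm]
  · simp_rw [pair_comm a b]
    rw [obnd_mulVec_compl_pair ψ h, Ne, (hunit _).mul_right_eq_zero, sub_eq_zero]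

lemma obnd_mulVec_ne_zero_iff_injective (hn : 3 ≤ n) :
    (∀ r, (obnd n q *ᵥ ψ) r ≠ 0) ↔ Function.Injective ψ := by
  constructor
  · rintro h ⟨s, hs⟩ ⟨t, ht⟩ hst
    obtain ⟨a, rfl⟩ := exists_eq_compl_singleton (s := s) (by omega)
    obtain ⟨b, rfl⟩ := exists_eq_compl_singleton (s := t) (by omega)
    by_contra hne
    have hab : a ≠ b := by rintro rfl; exact hne rfl
    have hr : #({a, b}ᶜ : Finset (Fin (n - 1))) = n - 2 - 1 := by
      rw [card_compl, card_pair hab, Fintype.card_fin]; omega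
    exact (obnd_mulVec_compl_pair_ne_zero_iff ψ hab hr hs ht).mp (h _) hst
  · rintro hψ ⟨r, hr⟩
    obtain ⟨a, b, hab, rfl⟩ := exists_eq_compl_pair (r := r) (by omega)
    have hcard : ∀ c : Fin (n - 1), #({c}ᶜ : Finset (Fin (n - 1))) = n - 2 := fun c => by
      rw [card_compl, card_singleton, Fintype.card_fin]; omega
    rw [obnd_mulVec_compl_pair_ne_zero_iff ψ hab hr (hcard a) (hcard b)]
    exact fun h => hab (by simpa using congrArg Subtype.val (hψ h))

end Boundary

lemma card_injective_forall_ne {α β : Type*} [Fintype α] [Fintype β] [DecidableEq β] (b₀ : β) :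
    Nat.card {f : α → β // (∀ a, f a ≠ b₀) ∧ Function.Injective f} =
      (Fintype.card β - 1).descFactorial (Fintype.card α) := by
  let e : {f : α → β // (∀ a, f a ≠ b₀) ∧ Function.Injective f} ≃ (α ↪ {b // b ≠ b₀}) :=
    { toFun := fun f => ⟨fun a => ⟨f.1 a, f.2.1 a⟩, fun _ _ h => f.2.2 (congrArg Subtype.val h)⟩
      invFun := fun g => ⟨fun a => g a, fun a => (g a).2, Subtype.val_injective.comp g.injective⟩ }
  rw [Nat.card_congr e, Nat.card_eq_fintype_card, Fintype.card_embedding_eq,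
    Fintype.card_subtype_compl, Fintype.card_subtype_eq]

lemma cast_descFactorial_pred_eq_prod_Icc {q : ℕ} (hq : 1 ≤ q) (k : ℕ) :
    (((q - 1).descFactorial k : ℕ) : ℤ) = ∏ i ∈ Icc 1 k, ((q : ℤ) - i) := by
  rw [← descPochhammer_eval_eq_descFactorial, descPochhammer_eval_eq_prod_range,
    ← Ico_add_one_right_eq_Icc, prod_Ico_eq_prod_range, Nat.add_sub_cancel, Nat.cast_sub hq]
  push_cast
  ring_nf

/-- Lemma 4.7: a vector `ψ ∈ ℤ_q^{n-1}` on the facets of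
`K_{n-1}^{n-2}` is nowhere zero with `∂ψ` everywhere nonzero mod `q` iff its entries
are nonzero and pairwise distinct mod `q`; consequently the number of such `ψ` is
`(q-1)(q-2)⋯(q-(n-1))`. -/
theorem stmt8 (n q : ℕ) (hn : 3 ≤ n) (hq : 1 ≤ q) :
    (∀ ψ : {s : Finset (Fin (n - 1)) // s.card = n - 2} → ZMod q,
      ((∀ s, ψ s ≠ 0) ∧ ∀ r, (obnd n q).mulVec ψ r ≠ 0) ↔
        ((∀ s, ψ s ≠ 0) ∧ Function.Injective ψ)) ∧
    (Nat.card {ψ : {s : Finset (Fin (n - 1)) // s.card = n - 2} → ZMod q //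
        (∀ s, ψ s ≠ 0) ∧ ∀ r, (obnd n q).mulVec ψ r ≠ 0} : ℤ) =
      ∏ i ∈ Finset.Icc 1 (n - 1), ((q : ℤ) - i) := by
  have hiff : ∀ ψ : {s : Finset (Fin (n - 1)) // s.card = n - 2} → ZMod q,
      ((∀ s, ψ s ≠ 0) ∧ ∀ r, (obnd n q).mulVec ψ r ≠ 0) ↔
        ((∀ s, ψ s ≠ 0) ∧ Function.Injective ψ) :=
    fun ψ => and_congr_right fun _ => obnd_mulVec_ne_zero_iff_injective ψ hn
  refine ⟨hiff, ?_⟩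
  have : NeZero q := ⟨by omega⟩
  have hfacets : Fintype.card {s : Finset (Fin (n - 1)) // s.card = n - 2} = n - 1 := by
    rw [Fintype.card_finset_len, Fintype.card_fin, show n - 2 = n - 1 - 1 by omega,
      Nat.choose_symm (by omega), Nat.choose_one_right]
  rw [Nat.card_congr (Equiv.subtypeEquivRight hiff), card_injective_forall_ne, ZMod.card,
    hfacets, cast_descFactorial_pred_eq_prod_Icc hq]
end

section
/- If Δ is a bridgeless simplicial complex (no facet is a coloop of the simplicial matroid), then Φ_Δ(q) ≠ 0 for some q; that is, Δ admits a nowhere-zero modular q-flow. -/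
open Matrix

/-- Rank over `ℚ` of an integer matrix. -/
noncomputable def rankQ {a b : Type} [Fintype a] [Fintype b] (M : Matrix a b ℤ) : ℕ :=
  (M.map ((↑) : ℤ → ℚ)).rank

/-- Submatrix on the columns indexed by `X`. -/
def colsub {a b : Type} (M : Matrix a b ℤ) (X : Finset b) : Matrix a X ℤ :=
  M.submatrix id (fun x => x.1)

/-- `β_d(X)`: the top Betti number of the subcomplex `X ∪ Δ_{d-1}`. -/
noncomputable def betaTop {m : ℕ} (K : Finset (Finset (Fin m))) (d : ℕ)
    (X : Finset {s : Finset (Fin m) // s ∈ K ∧ s.card = d + 1}) : ℤ :=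
  (X.card : ℤ) - rankQ (colsub (kbnd K (d + 1)) X)

/-- `β_{d-1}(X)`: the codimension-one Betti number of the subcomplex `X ∪ Δ_{d-1}`,
namely `dim ker ∂_{d-1} − rank ∂_X` over `ℚ`. -/
noncomputable def betaLow {m : ℕ} (K : Finset (Finset (Fin m))) (d : ℕ)
    (X : Finset {s : Finset (Fin m) // s ∈ K ∧ s.card = d + 1}) : ℤ :=
  ((Fintype.card {s : Finset (Fin m) // s ∈ K ∧ s.card = d} : ℤ) - rankQ (kbnd K d))
    - rankQ (colsub (kbnd K (d + 1)) X)

/-- `f` is a coloop (bridge) of the simplicial matroid: its column of the top boundary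
map does not lie in the span of the other columns. -/
def IsColoop {m : ℕ} (K : Finset (Finset (Fin m))) (d : ℕ)
    (f : {s : Finset (Fin m) // s ∈ K ∧ s.card = d + 1}) : Prop :=
  (fun r => ((kbnd K (d + 1)) r f : ℚ)) ∉
    Submodule.span ℚ
      ((fun g => fun r => ((kbnd K (d + 1)) r g : ℚ)) '' {g | g ≠ f})


/-! A facet that is not a bridge lies in the support of some rational cycle. Over the infinite
field `ℚ` the cycle space is not the union of the finitely many hyperplanes `{z | z f = 0}`, so
some cycle is nowhere zero. Clearing its denominators gives a nowhere-zero integer cycle, and its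
reduction modulo any `q` larger than all of its entries is a nowhere-zero `q`-flow. -/

namespace Matrix

variable {R F : Type*} [Fintype F]

theorem exists_mulVec_eq_zero_apply_ne_zero_of_col_mem_span {A : Type*} [CommRing A]
    [Nontrivial A] [DecidableEq F] (M : Matrix R F A) {f : F}
    (h : M.col f ∈ Submodule.span A (M.col '' {g | g ≠ f})) :
    ∃ v : F → A, M *ᵥ v = 0 ∧ v f ≠ 0 := by
  obtain ⟨l, hl, hlf⟩ := (Finsupp.mem_span_image_iff_linearCombination A).mp h
  have hlf' : l f = 0 := (Finsupp.mem_supported' A l).mp hl f (by simp)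
  refine ⟨⇑l - Pi.single f 1, ?_, by simp [hlf']⟩
  rw [mulVec_sub, mulVec_single_one, ← hlf, Finsupp.linearCombination_apply,
    Finsupp.sum_fintype _ _ (by simp), mulVec_eq_sum, sub_eq_zero]
  simp [col_def]

theorem exists_mulVec_eq_zero_forall_ne_zero {K : Type*} [Field K] [Infinite K]
    (M : Matrix R F K) (h : ∀ f, M.col f ∈ Submodule.span K (M.col '' {g | g ≠ f})) :
    ∃ v : F → K, M *ᵥ v = 0 ∧ ∀ f, v f ≠ 0 := by
  classical
  exact Module.Dual.exists_forall_mem_ne_zero_of_forall_exists (LinearMap.ker M.mulVecLin)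
    (fun f => LinearMap.proj f) fun f => M.exists_mulVec_eq_zero_apply_ne_zero_of_col_mem_span (h f)

theorem exists_mulVec_eq_zero_forall_ne_zero_of_fractionRing {A K : Type*} [CommRing A]
    [Field K] [Algebra A K] [IsFractionRing A K] (M : Matrix R F A) {v : F → K}
    (hv : M.map (algebraMap A K) *ᵥ v = 0) (hvne : ∀ f, v f ≠ 0) :
    ∃ x : F → A, M *ᵥ x = 0 ∧ ∀ f, x f ≠ 0 := by
  obtain ⟨b, hb⟩ := IsLocalization.exist_integer_multiples_of_finite (nonZeroDivisors A) v
  choose x hx using hb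
  have hb0 : algebraMap A K b ≠ 0 := (IsLocalization.map_units K b).ne_zero
  refine ⟨x, funext fun r => IsFractionRing.injective A K ?_, fun f hf => ?_⟩
  · rw [RingHom.map_mulVec, show algebraMap A K ∘ x = (b : A) • v from funext hx, mulVec_smul,
      hv]
    simp
  · have hxf := hx f
    rw [hf, map_zero, Algebra.smul_def] at hxf
    exact mul_ne_zero hb0 (hvne f) hxf.symm

theorem map_intCast_mulVec_eq_zero {S : Type*} [Ring S] (M : Matrix R F ℤ) {x : F → ℤ}
    (hx : M *ᵥ x = 0) : M.map (Int.cast : ℤ → S) *ᵥ (fun f => (x f : S)) = 0 := by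
  funext r
  simpa [hx, Function.comp_def] using ((Int.castRingHom S).map_mulVec M x r).symm

end Matrix

theorem ZMod.intCast_ne_zero_of_abs_lt {q : ℕ} {a : ℤ} (ha : a ≠ 0) (hq : |a| < q) :
    (a : ZMod q) ≠ 0 := by
  rw [Ne, ZMod.intCast_zmod_eq_zero_iff_dvd]
  exact fun hdvd => ha (Int.eq_zero_of_abs_lt_dvd hdvd hq)

theorem kFlowCount_ne_zero_of_int_flow {m : ℕ} (K : Finset (Finset (Fin m))) (d q : ℕ) [NeZero q]
    (x : {s : Finset (Fin m) // s ∈ K ∧ s.card = d + 1} → ℤ) (hx : kbnd K (d + 1) *ᵥ x = 0)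
    (hxne : ∀ s, x s ≠ 0) (hxq : ∀ s, |x s| < q) :
    kFlowCount K d q ≠ 0 := by
  have : Nonempty {φ : {s : Finset (Fin m) // s ∈ K ∧ s.card = d + 1} → ZMod q //
      ((kbnd K (d + 1)).map (Int.cast : ℤ → ZMod q)).mulVec φ = 0 ∧ ∀ s, φ s ≠ 0} :=
    ⟨⟨_, (kbnd K (d + 1)).map_intCast_mulVec_eq_zero hx,
      fun s => ZMod.intCast_ne_zero_of_abs_lt (hxne s) (hxq s)⟩⟩
  exact Nat.card_pos.ne'

theorem stmt10_general {m : ℕ} (K : Finset (Finset (Fin m))) (d : ℕ)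
    (hbridgeless : ∀ f, ¬ IsColoop K d f) :
    ∃ q : ℕ, 0 < q ∧ kFlowCount K d q ≠ 0 := by
  obtain ⟨v, hv, hvne⟩ :=
    ((kbnd K (d + 1)).map (Int.cast : ℤ → ℚ)).exists_mulVec_eq_zero_forall_ne_zero
      fun f => not_not.mp (hbridgeless f)
  obtain ⟨x, hx, hxne⟩ :=
    (kbnd K (d + 1)).exists_mulVec_eq_zero_forall_ne_zero_of_fractionRing (K := ℚ) hv hvne
  set q := (Finset.univ.sup fun s => (x s).natAbs) + 1
  refine ⟨q, Nat.succ_pos _, kFlowCount_ne_zero_of_int_flow K d q x hx hxne fun s => ?_⟩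
  rw [Int.abs_eq_natAbs, Nat.cast_lt, Nat.lt_succ_iff]
  exact Finset.le_sup (f := fun s => (x s).natAbs) (Finset.mem_univ s)

/-- Corollary 5.5: if the `d`-dimensional simplicial complex `Δ` is
bridgeless (no facet is a coloop of the simplicial matroid), then `Φ_Δ(q) ≠ 0` for some
`q`, i.e. `Δ` admits a nowhere-zero modular `q`-flow. -/
theorem stmt10 {m : ℕ} (K : Finset (Finset (Fin m))) (d : ℕ)
    (hK : ∀ s ∈ K, ∀ t ⊆ s, t ∈ K)
    (hbridgeless : ∀ f, ¬ IsColoop K d f) :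
    ∃ q : ℕ, 0 < q ∧ kFlowCount K d q ≠ 0 :=
  stmt10_general K d hbridgeless
end

section
/- If the flow quasipolynomial Φ_Δ(q) is a polynomial in q, then Φ_Δ(q) equals Bott's R polynomial R_Δ(q) = Σ_{X⊆F} (−1)^{|F|−|X|} q^{β_d(X)}; in general Φ_Δ(q) = Σ_{X⊆F} (−1)^{|F|−|X|} |ker ∂_X (mod q)|. -/
/-!
Inclusion–exclusion over the set of facets on which a flow may be nonzero gives the first
identity. For the second, an integer matrix has the same rank mod `p` as over `ℚ` unless `p`
divides a maximal nonsingular minor, so `|ker ∂_X (mod p)| = p ^ β_d(X)` for all but finitely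
many primes `p`. Hence `Φ_Δ` and Bott's polynomial agree at infinitely many primes, and a
polynomial `Φ_Δ` must be Bott's polynomial.
-/

open Matrix

/-- `|ker ∂_X (mod q)|`: the number of mod-`q` kernel vectors of the boundary matrix
restricted to the columns `X`. -/
noncomputable def kerCount {m : ℕ} (K : Finset (Finset (Fin m))) (d q : ℕ)
    (X : Finset {s : Finset (Fin m) // s ∈ K ∧ s.card = d + 1}) : ℕ :=
  Nat.card {φ : X → ZMod q //
    ((colsub (kbnd K (d + 1)) X).map (Int.cast : ℤ → ZMod q)).mulVec φ = 0}

open Finset Filter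

section InclusionExclusion

variable {b R : Type*} [Fintype b] [DecidableEq b] [Fintype R] [Zero R] [DecidableEq R]

theorem card_nowhereZero_eq_sum_card_supported (P : (b → R) → Prop) [DecidablePred P] :
    (Nat.card {ψ : b → R // P ψ ∧ ∀ s, ψ s ≠ 0} : ℤ) =
      ∑ X : Finset b, (-1 : ℤ) ^ (Fintype.card b - X.card) *
        Nat.card {ψ : b → R // P ψ ∧ ∀ s ∉ X, ψ s = 0} := by
  have card_and (Q : (b → R) → Prop) [DecidablePred Q] :
      Nat.card {ψ // P ψ ∧ Q ψ} = #{x : {ψ // P ψ} | Q x.1} := by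
    rw [← Nat.card_congr (Equiv.subtypeSubtypeEquivSubtypeInter P Q), Nat.card_eq_fintype_card,
      Fintype.card_subtype]
  let S : b → Finset {ψ // P ψ} := fun s => {x | x.1 s = 0}
  have hsupp (X : Finset b) : Nat.card {ψ // P ψ ∧ ∀ s ∉ X, ψ s = 0} = #(Xᶜ.inf S) := by
    rw [card_and]; congr 1; ext x; simp [S, Finset.mem_inf]
  have hnz : Nat.card {ψ // P ψ ∧ ∀ s, ψ s ≠ 0} = #(univ.inf fun s => (S s)ᶜ) := by
    rw [card_and]; congr 1; ext x; simp [S, Finset.mem_inf]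
  rw [hnz, inclusion_exclusion_card_inf_compl, powerset_univ,
    ← compl_involutive.bijective.sum_comp]
  refine sum_congr rfl fun X _ => ?_
  rw [hsupp, card_compl]

end InclusionExclusion

section Support

variable {a b R : Type*} [Fintype b] [DecidableEq b] [CommRing R]

theorem mulVec_extend_by_zero (M : Matrix a b R) (X : Finset b) (φ : X → R) :
    M *ᵥ (fun s => if h : s ∈ X then φ ⟨s, h⟩ else 0) = M.submatrix id (↑) *ᵥ φ := by
  ext r
  simp only [mulVec, dotProduct, submatrix_apply, id_eq, mul_dite, mul_zero]
  rw [← sum_subset (subset_univ X) fun s _ hs => dif_neg hs, ← sum_attach]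
  simp

theorem card_ker_submatrix_eq_card_ker_supported (M : Matrix a b R) (X : Finset b) :
    Nat.card {φ : X → R // M.submatrix id (↑) *ᵥ φ = 0} =
      Nat.card {ψ : b → R // M *ᵥ ψ = 0 ∧ ∀ s ∉ X, ψ s = 0} :=
  Nat.card_congr
    { toFun φ := ⟨fun s => if h : s ∈ X then φ.1 ⟨s, h⟩ else 0,
        by rw [mulVec_extend_by_zero]; exact φ.2, fun s hs => dif_neg hs⟩
      invFun ψ := ⟨fun s => ψ.1 s, by
        rw [← mulVec_extend_by_zero]
        convert ψ.2.1 using 2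
        ext s; split_ifs with h
        · rfl
        · exact (ψ.2.2 s h).symm⟩
      left_inv φ := by ext; simp
      right_inv ψ := by
        ext s; by_cases h : s ∈ X
        · simp [h]
        · simp [h, ψ.2.2 s h] }

end Support

section Rank

variable {a b : Type*} [Fintype b]

theorem card_ker_mulVec {K : Type*} [Field K] (N : Matrix a b K) :
    Nat.card {φ : b → K // N *ᵥ φ = 0} = Nat.card K ^ (Fintype.card b - N.rank) := by
  have hker : {φ : b → K // N *ᵥ φ = 0} ≃ LinearMap.ker N.mulVecLin :=
    Equiv.subtypeEquivRight fun φ => by simp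
  have := LinearMap.finrank_range_add_finrank_ker N.mulVecLin
  rw [Module.finrank_fintype_fun_eq_card] at this
  rw [Nat.card_congr hker, Module.natCard_eq_pow_finrank (K := K), rank]
  congr 1
  omega

theorem exists_linearIndependent_cols {K : Type*} [Field K] (A : Matrix a b K) {ι : Type*}
    [Fintype ι] (hι : Fintype.card ι = A.rank) :
    ∃ g : ι → b, LinearIndependent K (A.submatrix id g).col := by
  obtain ⟨κ, c, hc, hspan, hli⟩ := exists_linearIndependent' K A.col
  have : Fintype κ := @Fintype.ofFinite κ (Finite.of_injective c hc)
  have hκ : Fintype.card κ = A.rank := by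
    rw [← finrank_span_eq_card hli, hspan, rank_eq_finrank_span_cols]
  let e := Fintype.equivOfCardEq (hι.trans hκ.symm)
  exact ⟨c ∘ e, hli.comp e e.injective⟩

theorem le_rank_map_intCast_of_det_ne_zero (K : Type*) [Field K] (N : Matrix a b ℤ) {r : ℕ}
    (f : Fin r → a) (g : Fin r → b) (h : ((N.submatrix f g).det : K) ≠ 0) :
    r ≤ (N.map (Int.cast : ℤ → K)).rank := by
  rw [Int.cast_det] at h
  calc r = ((N.submatrix f g).map (Int.cast : ℤ → K)).rank := by
        rw [rank_of_det_ne_zero h, Fintype.card_fin]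
    _ ≤ _ := rank_submatrix_le (N.map Int.cast) f g

variable [Fintype a]

theorem exists_isUnit_det_submatrix {K : Type*} [Field K] (A : Matrix a b K) :
    ∃ (f : Fin A.rank → a) (g : Fin A.rank → b), IsUnit (A.submatrix f g).det := by
  obtain ⟨g, hg⟩ := exists_linearIndependent_cols A (Fintype.card_fin _)
  obtain ⟨f, hf⟩ := exists_linearIndependent_cols (A.submatrix id g)ᵀ
    (LinearIndependent.rank_matrix (M := (A.submatrix id g)ᵀ) hg).symm
  exact ⟨f, g, (isUnit_iff_isUnit_det _).1 (linearIndependent_rows_iff_isUnit.1 hf)⟩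

variable (K : Type*) [Field K]

theorem exists_det_ne_zero_of_rank_map_intCast (N : Matrix a b ℤ) :
    ∃ (f : Fin (N.map (Int.cast : ℤ → K)).rank → a)
      (g : Fin (N.map (Int.cast : ℤ → K)).rank → b), ((N.submatrix f g).det : K) ≠ 0 := by
  obtain ⟨f, g, h⟩ := exists_isUnit_det_submatrix (N.map (Int.cast : ℤ → K))
  exact ⟨f, g, by rw [Int.cast_det]; exact h.ne_zero⟩

theorem rank_map_intCast_le_of_charZero (L : Type*) [Field L] [CharZero L] (N : Matrix a b ℤ) :
    (N.map (Int.cast : ℤ → K)).rank ≤ (N.map (Int.cast : ℤ → L)).rank := by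
  obtain ⟨f, g, h⟩ := exists_det_ne_zero_of_rank_map_intCast K N
  exact le_rank_map_intCast_of_det_ne_zero L N f g
    (Int.cast_ne_zero.2 fun h0 => h (by rw [h0, Int.cast_zero]))

end Rank

/-- The exceptional primes are those dividing a maximal nonsingular minor over `ℚ`. -/
theorem eventually_rank_map_zmod_eq {a b : Type*} [Fintype a] [Fintype b] (N : Matrix a b ℤ) :
    ∀ᶠ p in atTop, p.Prime →
      (N.map (Int.cast : ℤ → ZMod p)).rank = (N.map (Int.cast : ℤ → ℚ)).rank := by
  obtain ⟨f, g, h⟩ := exists_det_ne_zero_of_rank_map_intCast ℚ N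
  have hD : (N.submatrix f g).det ≠ 0 := Int.cast_ne_zero.1 h
  filter_upwards [eventually_gt_atTop (N.submatrix f g).det.natAbs] with p hp hprime
  have := Fact.mk hprime
  refine le_antisymm (rank_map_intCast_le_of_charZero _ ℚ N)
    (le_rank_map_intCast_of_det_ne_zero _ N f g fun h0 => ?_)
  rw [ZMod.intCast_zmod_eq_zero_iff_dvd, Int.ofNat_dvd_left] at h0
  exact absurd (Nat.le_of_dvd (Int.natAbs_pos.2 hD) h0) (not_le.2 hp)

theorem Polynomial.eq_of_eventually_eval_prime_eq {P Q : Polynomial ℤ}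
    (h : ∀ᶠ p : ℕ in atTop, p.Prime → P.eval (p : ℤ) = Q.eval (p : ℤ)) : P = Q := by
  have hprimes : ∃ᶠ p : ℕ in atTop, p.Prime :=
    Nat.frequently_atTop_iff_infinite.2 Nat.infinite_setOfPred_prime
  have hinf : {p : ℕ | P.eval (p : ℤ) = Q.eval (p : ℤ)}.Infinite :=
    Nat.frequently_atTop_iff_infinite.1 <|
      (hprimes.and_eventually h).mono fun p hp => hp.2 hp.1
  exact Polynomial.eq_of_infinite_eval_eq P Q <|
    (hinf.image Nat.cast_injective.injOn).mono (by rintro _ ⟨p, hp, rfl⟩; exact hp)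

section FlowPolynomial

variable {m : ℕ} (K : Finset (Finset (Fin m))) (d : ℕ)

theorem kFlowCount_eq_sum_kerCount (q : ℕ) [NeZero q] :
    (kFlowCount K d q : ℤ) =
      ∑ X : Finset {s : Finset (Fin m) // s ∈ K ∧ s.card = d + 1},
        (-1 : ℤ) ^ (Fintype.card {s : Finset (Fin m) // s ∈ K ∧ s.card = d + 1} - X.card) *
          (kerCount K d q X : ℤ) := by
  rw [kFlowCount, card_nowhereZero_eq_sum_card_supported]
  refine sum_congr rfl fun X _ => ?_
  rw [kerCount, ← card_ker_submatrix_eq_card_ker_supported]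
  rfl

theorem kerCount_eq_pow (p : ℕ) [Fact p.Prime]
    (X : Finset {s : Finset (Fin m) // s ∈ K ∧ s.card = d + 1})
    (hrank : ((colsub (kbnd K (d + 1)) X).map (Int.cast : ℤ → ZMod p)).rank =
      rankQ (colsub (kbnd K (d + 1)) X)) :
    kerCount K d p X = p ^ (X.card - rankQ (colsub (kbnd K (d + 1)) X)) := by
  rw [kerCount, card_ker_mulVec, hrank, Nat.card_zmod, Fintype.card_coe]

/-- Bott's polynomial `R_Δ`; the exponent `|X| - rank ∂_X` is `β_d(X)`. -/
noncomputable def bottPoly : Polynomial ℤ :=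
  ∑ X : Finset {s : Finset (Fin m) // s ∈ K ∧ s.card = d + 1},
    Polynomial.C
        ((-1 : ℤ) ^ (Fintype.card {s : Finset (Fin m) // s ∈ K ∧ s.card = d + 1} - X.card)) *
      Polynomial.X ^ (X.card - rankQ (colsub (kbnd K (d + 1)) X))

theorem eval_bottPoly (t : ℤ) :
    (bottPoly K d).eval t =
      ∑ X : Finset {s : Finset (Fin m) // s ∈ K ∧ s.card = d + 1},
        (-1 : ℤ) ^ (Fintype.card {s : Finset (Fin m) // s ∈ K ∧ s.card = d + 1} - X.card) *
          t ^ (X.card - rankQ (colsub (kbnd K (d + 1)) X)) := by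
  simp [bottPoly, Polynomial.eval_finsetSum]

theorem eventually_kFlowCount_eq_eval_bottPoly :
    ∀ᶠ p in atTop, p.Prime → (kFlowCount K d p : ℤ) = (bottPoly K d).eval (p : ℤ) := by
  have hrank := eventually_all.2 fun X => eventually_rank_map_zmod_eq (colsub (kbnd K (d + 1)) X)
  filter_upwards [hrank] with p hp hprime
  have := Fact.mk hprime
  rw [kFlowCount_eq_sum_kerCount, eval_bottPoly]
  refine sum_congr rfl fun X _ => ?_
  rw [kerCount_eq_pow K d p X (hp X hprime)]
  push_cast
  rfl

end FlowPolynomial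

theorem stmt19_general {m : ℕ} (K : Finset (Finset (Fin m))) (d : ℕ) :
    (∀ q : ℕ, 0 < q →
      (kFlowCount K d q : ℤ) =
        ∑ X : Finset {s : Finset (Fin m) // s ∈ K ∧ s.card = d + 1},
          (-1 : ℤ) ^ (Fintype.card {s : Finset (Fin m) // s ∈ K ∧ s.card = d + 1}
              - X.card) * (kerCount K d q X : ℤ)) ∧
    ((∃ p : Polynomial ℤ, ∀ q : ℕ, 0 < q → (kFlowCount K d q : ℤ) = p.eval (q : ℤ)) →
      ∀ q : ℕ, 0 < q →
        (kFlowCount K d q : ℤ) =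
          ∑ X : Finset {s : Finset (Fin m) // s ∈ K ∧ s.card = d + 1},
            (-1 : ℤ) ^ (Fintype.card {s : Finset (Fin m) // s ∈ K ∧ s.card = d + 1}
                - X.card) * (q : ℤ) ^ (X.card - rankQ (colsub (kbnd K (d + 1)) X))) := by
  refine ⟨fun q hq => by have : NeZero q := ⟨hq.ne'⟩; exact kFlowCount_eq_sum_kerCount K d q, ?_⟩
  rintro ⟨P, hP⟩ q hq
  have hPR : P = bottPoly K d := Polynomial.eq_of_eventually_eval_prime_eq <|
    (eventually_kFlowCount_eq_eval_bottPoly K d).mono fun p hp hprime =>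
      (hP p hprime.pos).symm.trans (hp hprime)
  rw [hP q hq, hPR, eval_bottPoly]

/-- Proposition 3.15 and Corollary 3.6: in general
`Φ_Δ(q) = ∑_{X ⊆ F} (−1)^{|F|−|X|} |ker ∂_X (mod q)|`, and if `Φ_Δ(q)` is a polynomial
in `q` then `Φ_Δ(q)` equals Bott's polynomial
`R_Δ(q) = ∑_{X ⊆ F} (−1)^{|F|−|X|} q^{β_d(X)}`. -/
theorem stmt19 {m : ℕ} (K : Finset (Finset (Fin m))) (d : ℕ)
    (hK : ∀ s ∈ K, ∀ t ⊆ s, t ∈ K) :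
    (∀ q : ℕ, 0 < q →
      (kFlowCount K d q : ℤ) =
        ∑ X : Finset {s : Finset (Fin m) // s ∈ K ∧ s.card = d + 1},
          (-1 : ℤ) ^ (Fintype.card {s : Finset (Fin m) // s ∈ K ∧ s.card = d + 1}
              - X.card) * (kerCount K d q X : ℤ)) ∧
    ((∃ p : Polynomial ℤ, ∀ q : ℕ, 0 < q → (kFlowCount K d q : ℤ) = p.eval (q : ℤ)) →
      ∀ q : ℕ, 0 < q →
        (kFlowCount K d q : ℤ) =
          ∑ X : Finset {s : Finset (Fin m) // s ∈ K ∧ s.card = d + 1},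
            (-1 : ℤ) ^ (Fintype.card {s : Finset (Fin m) // s ∈ K ∧ s.card = d + 1}
                - X.card) * (q : ℤ) ^ (X.card - rankQ (colsub (kbnd K (d + 1)) X))) :=
  stmt19_general K d
end
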